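/- arXiv:1805.06755 — 5 statements merged into one kernel-verified Lean document; each statement's English description precedes it below -/
import Mathlib

section
/- Let m be a positive integer and let s, β, ν be real numbers with β > 0, 2mν > −1 and s > 2mνβ. Then ∫_0^∞ e^{−sx}·( ∑_{i=0}^{m-1} C(2m, i)·cosh((2m − 2i)βx) + (1/2)·C(2m, m) )^ν dx = 2^{−ν} · ∑_{k=0}^{∞} ( (−1)^k / k! ) · ( ∏_{j=0}^{k-1} (−2mν + j) ) · 1/(s − 2mνβ + 2kβ), where the infinite series on the right converges absolutely. (This series is the hypergeometric value ₂F₁(−2mν, s/(2β) − mν; s/(2β) − mν + 1; −1) divided by (s − 2mνβ).) -/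
/-!
Since `2 cosh u = eᵘ (1 + e^{-2u})`, the bracket equals `(2 cosh βx)^{2m} / 2`, so the integrand
is `2^{-ν} e^{-(s - 2mνβ)x} (1 + e^{-2βx})^{2mν}`. Expanding the last factor in the binomial
series in `t = e^{-2βx} < 1` and integrating term by term gives the series, with
`(-1)^k/k! ∏_{j<k} (j - a) = C(a, k)` for `a = 2mν`. The interchange is justified by the absolute
convergence of `∑ |C(a, k)| / (k + 1)` for `a > -1`: once `k ≥ a`, the identity
`|C(a, k)| - |C(a, k+1)| = (1 + a) |C(a, k)| / (k + 1)` makes its tail telescope (Raabe's test).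
-/

open Finset MeasureTheory Real

section

variable {K : Type*} [Field K] [CharZero K]

theorem Ring.choose_eq_prod_div_factorial (a : K) (k : ℕ) :
    Ring.choose a k = (∏ j ∈ range k, (a - j)) / k.factorial := by
  rw [Ring.choose_eq_smul, ← Polynomial.aeval_eq_smeval, Polynomial.aeval_def,
    Polynomial.eval₂_eq_eval_map, descPochhammer_map, descPochhammer_eval_eq_prod_range,
    smul_eq_mul, div_eq_inv_mul]

theorem Ring.choose_succ_eq_choose_mul_sub_div (a : K) (k : ℕ) :
    Ring.choose a (k + 1) = Ring.choose a k * (a - k) / (k + 1) := by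
  rw [Ring.choose_eq_prod_div_factorial, Ring.choose_eq_prod_div_factorial, prod_range_succ,
    Nat.factorial_succ]
  push_cast
  field_simp

theorem Ring.choose_eq_neg_one_pow_div_factorial_mul_prod (a : K) (k : ℕ) :
    Ring.choose a k = (-1) ^ k / k.factorial * ∏ j ∈ range k, (-a + j) := by
  have hneg : ∏ j ∈ range k, (-a + j) = (-1) ^ k * ∏ j ∈ range k, (a - j) := by
    simp_rw [show ∀ j : ℕ, -a + j = -1 * (a - j) from fun j => by ring]
    rw [prod_mul_distrib, prod_const, card_range]
  rw [Ring.choose_eq_prod_div_factorial, hneg, div_mul_eq_mul_div, ← mul_assoc, ← pow_add,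
    ← two_mul, pow_mul, neg_one_sq, one_pow, one_mul]

end

theorem abs_choose_sub_abs_choose_succ {a : ℝ} {k : ℕ} (hk : a ≤ k) :
    |Ring.choose a k| - |Ring.choose a (k + 1)| = (1 + a) * |Ring.choose a k| / (k + 1) := by
  rw [Ring.choose_succ_eq_choose_mul_sub_div, abs_div, abs_mul, abs_of_nonpos (sub_nonpos.2 hk),
    abs_of_pos (by positivity : (0 : ℝ) < k + 1)]
  field_simp
  ring

theorem summable_abs_choose_div_succ {a : ℝ} (ha : -1 < a) :
    Summable fun k : ℕ => |Ring.choose a k| / (k + 1) := by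
  obtain ⟨N, hN⟩ := exists_nat_ge a
  have ha' : 0 < 1 + a := by linarith
  rw [← summable_nat_add_iff N]
  refine summable_of_sum_range_le (c := |Ring.choose a N| / (1 + a))
    (fun _ => by positivity) fun n => ?_
  have htel : ∑ i ∈ range n, (1 + a) * (|Ring.choose a (i + N)| / ((i + N : ℕ) + 1))
      = |Ring.choose a N| - |Ring.choose a (n + N)| := by
    have htelescope := sum_range_sub' (fun i => |Ring.choose a (i + N)|) n
    rw [zero_add] at htelescope
    rw [← htelescope]
    refine sum_congr rfl fun i _ => ?_
    rw [add_right_comm, abs_choose_sub_abs_choose_succ (hN.trans (by simp)), mul_div_assoc]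
  rw [le_div_iff₀ ha', mul_comm, mul_sum, htel]
  linarith [abs_nonneg (Ring.choose a (n + N))]

theorem summable_abs_choose_div_add_mul {a c b : ℝ} (ha : -1 < a) (hc : 0 < c) (hb : 0 < b) :
    Summable fun k : ℕ => |Ring.choose a k| / (c + k * b) := by
  have hμ : 0 < min c b := lt_min hc hb
  refine ((summable_abs_choose_div_succ ha).div_const (min c b)).of_nonneg_of_le
    (fun k => by positivity) fun k => ?_
  rw [div_div]
  refine div_le_div_of_nonneg_left (abs_nonneg _) (by positivity) ?_
  nlinarith [min_le_left c b, min_le_right c b, (Nat.cast_nonneg k : (0 : ℝ) ≤ k)]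

theorem hasSum_choose_mul_pow (a : ℝ) {y : ℝ} (hy : |y| < 1) :
    HasSum (fun k => Ring.choose a k * y ^ k) ((1 + y) ^ a) := by
  have h := (one_add_rpow_hasFPowerSeriesOnBall_zero (a := a)).hasSum (y := y)
    (by simpa [edist_dist] using hy)
  simpa [binomialSeries, FormalMultilinearSeries.ofScalars] using h

theorem two_mul_cosh_pow (n : ℕ) (u : ℝ) :
    (2 * cosh u) ^ n = ∑ i ∈ range (n + 1), (n.choose i : ℝ) * cosh ((n - 2 * i) * u) := by
  have expand : ∀ v : ℝ, (exp v + exp (-v)) ^ n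
      = ∑ i ∈ range (n + 1), (n.choose i : ℝ) * exp ((2 * i - n) * v) := by
    intro v
    rw [add_pow]
    refine sum_congr rfl fun i hi => ?_
    rw [← exp_nat_mul, ← exp_nat_mul, ← exp_add,
      Nat.cast_sub (Nat.lt_succ_iff.1 (mem_range.1 hi))]
    ring_nf
  have h2 : (2 * cosh u) ^ n = ((exp u + exp (-u)) ^ n + (exp (-u) + exp (- -u)) ^ n) / 2 := by
    rw [cosh_eq, neg_neg, add_comm (exp (-u))]
    ring
  rw [h2, expand, expand, ← sum_add_distrib, sum_div]
  refine sum_congr rfl fun i _ => ?_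
  rw [cosh_eq]
  ring_nf

theorem Finset.sum_range_two_mul_add_one_of_symm {M : Type*} [AddCommMonoid M] (m : ℕ)
    {g : ℕ → M} (hg : ∀ i ≤ 2 * m, g (2 * m - i) = g i) :
    ∑ i ∈ range (2 * m + 1), g i = ∑ i ∈ range m, g i + g m + ∑ i ∈ range m, g i := by
  rw [show 2 * m + 1 = m + 1 + m by ring, sum_range_add, sum_range_succ]
  congr 1
  rw [← sum_range_reflect g m]
  refine sum_congr rfl fun j hj => ?_
  have := mem_range.1 hj
  rw [← hg _ (by omega)]
  congr 1
  omega

theorem sum_choose_mul_cosh_add_half (m : ℕ) (u : ℝ) :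
    ∑ i ∈ range m, ((2 * m).choose i : ℝ) * cosh ((2 * m - 2 * i) * u)
      + 1 / 2 * ((2 * m).choose m : ℝ) = (2 * cosh u) ^ (2 * m) / 2 := by
  rw [two_mul_cosh_pow, Finset.sum_range_two_mul_add_one_of_symm]
  · push_cast
    rw [sub_self, zero_mul, cosh_zero]
    ring
  · intro i hi
    rw [Nat.choose_symm hi, Nat.cast_sub hi, ← cosh_neg]
    push_cast
    ring_nf

theorem two_mul_cosh_eq (u : ℝ) : 2 * cosh u = exp u * (1 + exp (-2 * u)) := by
  rw [cosh_eq, mul_add, mul_one, ← exp_add]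
  ring_nf

theorem two_mul_cosh_pow_div_two_rpow (n : ℕ) (u ν : ℝ) :
    ((2 * cosh u) ^ n / 2) ^ ν = 2 ^ (-ν) * (exp (n * ν * u) * (1 + exp (-2 * u)) ^ (n * ν)) := by
  rw [two_mul_cosh_eq, mul_pow, div_eq_mul_inv, mul_rpow (by positivity) (by norm_num),
    mul_rpow (by positivity) (by positivity), ← exp_nat_mul, ← exp_mul, ← rpow_natCast,
    ← rpow_mul (by positivity), inv_rpow zero_le_two, ← rpow_neg zero_le_two]
  ring_nf

theorem integral_exp_mul_one_add_exp_rpow {a c b : ℝ} (ha : -1 < a) (hc : 0 < c) (hb : 0 < b) :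
    ∫ x in Set.Ioi 0, exp (-c * x) * (1 + exp (-b * x)) ^ a
      = ∑' k : ℕ, Ring.choose a k / (c + k * b) := by
  set G : ℕ → ℝ → ℝ := fun k x => Ring.choose a k * exp (-(c + k * b) * x)
  have hd (k : ℕ) : 0 < c + k * b := by positivity
  have hexp (k : ℕ) : ∫ x in Set.Ioi 0, exp (-(c + k * b) * x) = (c + k * b)⁻¹ := by
    rw [integral_exp_mul_Ioi (neg_lt_zero.2 (hd k)), mul_zero, exp_zero, neg_div_neg_eq, one_div]
  have hint (k : ℕ) : IntegrableOn (G k) (Set.Ioi 0) :=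
    (integrableOn_exp_mul_Ioi (neg_lt_zero.2 (hd k)) 0).const_mul _
  have hnorm : Summable fun k => ∫ x in Set.Ioi 0, ‖G k x‖ := by
    refine (summable_abs_choose_div_add_mul ha hc hb).congr fun k => ?_
    simp only [G, norm_mul, Real.norm_eq_abs, abs_exp, integral_const_mul, hexp, div_eq_mul_inv]
  have hseries : ∀ x ∈ Set.Ioi (0 : ℝ), exp (-c * x) * (1 + exp (-b * x)) ^ a = ∑' k, G k x := by
    intro x hx
    have hy : |exp (-b * x)| < 1 := by
      rw [abs_exp, exp_lt_one_iff]
      nlinarith [Set.mem_Ioi.1 hx]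
    rw [← ((hasSum_choose_mul_pow a hy).mul_left (exp (-c * x))).tsum_eq]
    refine tsum_congr fun k => ?_
    rw [← exp_nat_mul, mul_left_comm, ← exp_add]
    simp only [G]
    ring_nf
  rw [setIntegral_congr_fun measurableSet_Ioi hseries,
    ← (hasSum_integral_of_summable_integral_norm hint hnorm).tsum_eq]
  exact tsum_congr fun k => by rw [integral_const_mul, hexp, div_eq_mul_inv]

theorem stmt_6_general (m : ℕ) (s β ν : ℝ) (hβ : 0 < β)
    (hν : 2 * (m : ℝ) * ν > -1) (hs : s > 2 * (m : ℝ) * ν * β) :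
    (Summable fun k : ℕ =>
        |((-1 : ℝ) ^ k / (Nat.factorial k : ℝ)) *
          (∏ j ∈ Finset.range k, (-(2 * (m : ℝ) * ν) + (j : ℝ))) *
          (1 / (s - 2 * (m : ℝ) * ν * β + 2 * (k : ℝ) * β))|) ∧
    (∫ x in Set.Ioi (0 : ℝ),
        Real.exp (-s * x) *
          ((∑ i ∈ Finset.range m,
              (Nat.choose (2 * m) i : ℝ) *
                Real.cosh ((2 * (m : ℝ) - 2 * (i : ℝ)) * (β * x)))
            + (1 / 2) * (Nat.choose (2 * m) m : ℝ)) ^ ν)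
    = 2 ^ (-ν) *
        ∑' k : ℕ,
          ((-1 : ℝ) ^ k / (Nat.factorial k : ℝ)) *
            (∏ j ∈ Finset.range k, (-(2 * (m : ℝ) * ν) + (j : ℝ))) *
            (1 / (s - 2 * (m : ℝ) * ν * β + 2 * (k : ℝ) * β)) := by
  have hc : 0 < s - 2 * m * ν * β := by linarith
  have hb : 0 < 2 * β := by positivity
  have hterm (k : ℕ) : (-1) ^ k / k.factorial * (∏ j ∈ range k, (-(2 * m * ν) + j))
      * (1 / (s - 2 * m * ν * β + 2 * k * β))
      = Ring.choose (2 * m * ν) k / (s - 2 * m * ν * β + k * (2 * β)) := by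
    rw [Ring.choose_eq_neg_one_pow_div_factorial_mul_prod]
    ring
  have hintegrand (x : ℝ) : exp (-s * x) * ((∑ i ∈ range m, ((2 * m).choose i : ℝ)
      * cosh ((2 * m - 2 * i) * (β * x))) + 1 / 2 * ((2 * m).choose m : ℝ)) ^ ν
      = 2 ^ (-ν) * (exp (-(s - 2 * m * ν * β) * x) * (1 + exp (-(2 * β) * x)) ^ (2 * m * ν)) := by
    rw [sum_choose_mul_cosh_add_half, two_mul_cosh_pow_div_two_rpow,
      show -(s - 2 * m * ν * β) * x = -s * x + 2 * m * ν * (β * x) by ring, exp_add,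
      show -(2 * β) * x = -2 * (β * x) by ring]
    push_cast
    ring
  refine ⟨(summable_abs_choose_div_add_mul hν hc hb).congr fun k => ?_, ?_⟩
  · rw [hterm, abs_div, abs_of_pos (add_pos_of_pos_of_nonneg hc (by positivity))]
  · rw [setIntegral_congr_fun measurableSet_Ioi fun x _ => hintegrand x, integral_const_mul,
      integral_exp_mul_one_add_exp_rpow hν hc hb]
    simp_rw [hterm]

theorem stmt_6 (m : ℕ) (hm : 0 < m) (s β ν : ℝ) (hβ : 0 < β)
    (hν : 2 * (m : ℝ) * ν > -1) (hs : s > 2 * (m : ℝ) * ν * β) :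
    (Summable fun k : ℕ =>
        |((-1 : ℝ) ^ k / (Nat.factorial k : ℝ)) *
          (∏ j ∈ Finset.range k, (-(2 * (m : ℝ) * ν) + (j : ℝ))) *
          (1 / (s - 2 * (m : ℝ) * ν * β + 2 * (k : ℝ) * β))|) ∧
    (∫ x in Set.Ioi (0 : ℝ),
        Real.exp (-s * x) *
          ((∑ i ∈ Finset.range m,
              (Nat.choose (2 * m) i : ℝ) *
                Real.cosh ((2 * (m : ℝ) - 2 * (i : ℝ)) * (β * x)))
            + (1 / 2) * (Nat.choose (2 * m) m : ℝ)) ^ ν)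
    = 2 ^ (-ν) *
        ∑' k : ℕ,
          ((-1 : ℝ) ^ k / (Nat.factorial k : ℝ)) *
            (∏ j ∈ Finset.range k, (-(2 * (m : ℝ) * ν) + (j : ℝ))) *
            (1 / (s - 2 * (m : ℝ) * ν * β + 2 * (k : ℝ) * β)) :=
  stmt_6_general m s β ν hβ hν hs
end

section
/- Let α, β, p be real numbers with p > 0, β + α/p > 0 and β − α/p > 0. Then ∫_0^∞ cosh(2αt)/(cosh(pt))^{2β} dt = 4^{β−1}·p^{−1}·B(β + α/p, β − α/p). -/
/-!
With `a = β + α/p` and `b = β - α/p`, the integrand is `cosh ((a - b) x) / cosh x ^ (a + b)` at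
`x = p t`. It is even, so the half-line integral is half the integral over `ℝ`, and writing `cosh`
as a sum of exponentials leaves `∫ exp ((a - b) x) / (2 cosh x) ^ (a + b) dx` and its mirror
image.
The logistic substitution `u = sigmoid (2 x) = exp x / (2 cosh x)`, for which
`1 - u = exp (-x) / (2 cosh x)` and `du = 2 u (1 - u) dx`, turns that integral into
`½ ∫₀¹ u ^ (a - 1) (1 - u) ^ (b - 1) du = B(a, b) / 2`.
-/

open MeasureTheory

/-- The real Beta function: B(a,b) = Γ(a)Γ(b)/Γ(a+b). -/
noncomputable def realBeta (a b : ℝ) : ℝ :=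
  Real.Gamma a * Real.Gamma b / Real.Gamma (a + b)

open Real Set

lemma realBeta_comm (a b : ℝ) : realBeta a b = realBeta b a := by
  rw [realBeta, realBeta, mul_comm, add_comm]

section BetaIntegral

variable {a b : ℝ}

lemma ofReal_rpow_mul_one_sub_rpow {x : ℝ} (hx : x ∈ Icc (0 : ℝ) 1) (a b : ℝ) :
    ((x ^ (a - 1) * (1 - x) ^ (b - 1) : ℝ) : ℂ)
      = (x : ℂ) ^ ((a : ℂ) - 1) * (1 - (x : ℂ)) ^ ((b : ℂ) - 1) := by
  rw [Complex.ofReal_mul, Complex.ofReal_cpow hx.1, Complex.ofReal_cpow (sub_nonneg.2 hx.2)]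
  push_cast
  rfl

lemma intervalIntegrable_rpow_mul_one_sub_rpow (ha : 0 < a) (hb : 0 < b) :
    IntervalIntegrable (fun x : ℝ => x ^ (a - 1) * (1 - x) ^ (b - 1)) volume 0 1 := by
  have h := Complex.betaIntegral_convergent (u := a) (v := b) (by simpa) (by simpa)
  refine h.norm.congr fun x hx => ?_
  rw [uIoc_of_le zero_le_one] at hx
  have hx' : x ∈ Icc (0 : ℝ) 1 := Ioc_subset_Icc_self hx
  simp only [← ofReal_rpow_mul_one_sub_rpow hx', Complex.norm_real, Real.norm_eq_abs]
  exact abs_of_nonneg (mul_nonneg (rpow_nonneg hx'.1 _) (rpow_nonneg (sub_nonneg.2 hx'.2) _))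

lemma integrableOn_rpow_mul_one_sub_rpow (ha : 0 < a) (hb : 0 < b) :
    IntegrableOn (fun x : ℝ => x ^ (a - 1) * (1 - x) ^ (b - 1)) (Ioo 0 1) :=
  (intervalIntegrable_iff_integrableOn_Ioo_of_le zero_le_one).1
    (intervalIntegrable_rpow_mul_one_sub_rpow ha hb)

lemma realBeta_eq_integral (ha : 0 < a) (hb : 0 < b) :
    realBeta a b = ∫ x in Ioo (0 : ℝ) 1, x ^ (a - 1) * (1 - x) ^ (b - 1) := by
  rw [← integral_Ioc_eq_integral_Ioo, ← intervalIntegral.integral_of_le zero_le_one]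
  calc
    _ = (Complex.betaIntegral a b).re := ProbabilityTheory.beta_eq_betaIntegralReal a b ha hb
    _ = (∫ x in (0 : ℝ)..1, ((x ^ (a - 1) * (1 - x) ^ (b - 1) : ℝ) : ℂ)).re := by
      rw [Complex.betaIntegral]
      congr 1
      refine intervalIntegral.integral_congr fun x hx => (ofReal_rpow_mul_one_sub_rpow ?_ a b).symm
      rwa [uIcc_of_le zero_le_one] at hx
    _ = _ := by rw [intervalIntegral.integral_ofReal, Complex.ofReal_re]

end BetaIntegral

lemma sigmoid_two_mul (x : ℝ) : sigmoid (2 * x) = exp x / (2 * cosh x) := by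
  rw [sigmoid_def, cosh_eq]
  field_simp
  rw [add_mul, one_mul, ← exp_add, show -(2 * x) + x = -x by ring, add_comm]

lemma one_sub_sigmoid_two_mul (x : ℝ) : 1 - sigmoid (2 * x) = exp (-x) / (2 * cosh x) := by
  rw [← sigmoid_neg, ← mul_neg, sigmoid_two_mul, cosh_neg]

lemma hasDerivAt_sigmoid_two_mul (x : ℝ) :
    HasDerivAt (fun t => sigmoid (2 * t)) (2 * (sigmoid (2 * x) * (1 - sigmoid (2 * x)))) x := by
  have := (hasDerivAt_sigmoid (2 * x)).comp x ((hasDerivAt_id' x).const_mul 2)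
  rwa [mul_one, mul_comm _ (2 : ℝ)] at this

lemma sigmoid_two_mul_rpow_mul_one_sub_rpow (a b x : ℝ) :
    sigmoid (2 * x) ^ a * (1 - sigmoid (2 * x)) ^ b
      = exp ((a - b) * x) / (2 * cosh x) ^ (a + b) := by
  have hc : 0 < 2 * cosh x := by positivity
  rw [one_sub_sigmoid_two_mul, sigmoid_two_mul, div_rpow (exp_pos x).le hc.le,
    div_rpow (exp_pos _).le hc.le, ← exp_mul, ← exp_mul, rpow_add hc]
  field_simp
  rw [← exp_add]
  ring_nf

lemma strictMono_sigmoid_two_mul : StrictMono fun t => sigmoid (2 * t) :=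
  sigmoid_strictMono.comp (strictMono_mul_left_of_pos two_pos)

lemma image_univ_sigmoid_two_mul : (fun t => sigmoid (2 * t)) '' univ = Ioo 0 1 := by
  rw [image_univ, ← range_sigmoid]
  exact (mul_left_surjective₀ two_ne_zero).range_comp sigmoid

lemma jacobian_sigmoid_two_mul_mul_rpow (a b x : ℝ) :
    2 * (sigmoid (2 * x) * (1 - sigmoid (2 * x)))
        * (sigmoid (2 * x) ^ (a - 1) * (1 - sigmoid (2 * x)) ^ (b - 1))
      = 2 * (exp ((a - b) * x) / (2 * cosh x) ^ (a + b)) := by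
  have hs := sigmoid_pos (2 * x)
  have hs' : 0 < 1 - sigmoid (2 * x) := sub_pos.2 (sigmoid_lt_one _)
  rw [← sigmoid_two_mul_rpow_mul_one_sub_rpow, rpow_sub_one hs.ne', rpow_sub_one hs'.ne']
  field_simp

lemma sigmoid_mul_one_sub_sigmoid_pos (x : ℝ) : 0 < sigmoid x * (1 - sigmoid x) :=
  mul_pos (sigmoid_pos x) (sub_pos.2 (sigmoid_lt_one x))

lemma integrableOn_Ioo_zero_one_iff_integrable_sigmoid_two_mul {g : ℝ → ℝ} :
    IntegrableOn g (Ioo 0 1) ↔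
      Integrable fun t => 2 * (sigmoid (2 * t) * (1 - sigmoid (2 * t))) * g (sigmoid (2 * t)) := by
  rw [← image_univ_sigmoid_two_mul, integrableOn_image_iff_integrableOn_abs_deriv_smul
    MeasurableSet.univ (fun x _ => (hasDerivAt_sigmoid_two_mul x).hasDerivWithinAt)
    strictMono_sigmoid_two_mul.injective.injOn, integrableOn_univ]
  simp only [smul_eq_mul, abs_of_pos (mul_pos two_pos (sigmoid_mul_one_sub_sigmoid_pos _))]

lemma integral_Ioo_zero_one_eq_integral_sigmoid_two_mul (g : ℝ → ℝ) :
    ∫ u in Ioo 0 1, g u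
      = ∫ t, 2 * (sigmoid (2 * t) * (1 - sigmoid (2 * t))) * g (sigmoid (2 * t)) := by
  rw [← image_univ_sigmoid_two_mul, integral_image_eq_integral_abs_deriv_smul
    MeasurableSet.univ (fun x _ => (hasDerivAt_sigmoid_two_mul x).hasDerivWithinAt)
    strictMono_sigmoid_two_mul.injective.injOn, setIntegral_univ]
  simp only [smul_eq_mul, abs_of_pos (mul_pos two_pos (sigmoid_mul_one_sub_sigmoid_pos _))]

lemma cosh_mul_div_cosh_rpow (a b x : ℝ) :
    cosh ((a - b) * x) / cosh x ^ (a + b) = 2 ^ (a + b) / 2 * (exp ((a - b) * x) /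
      (2 * cosh x) ^ (a + b) + exp ((b - a) * x) / (2 * cosh x) ^ (b + a)) := by
  rw [add_comm b, mul_rpow zero_le_two (cosh_pos x).le, cosh_eq,
    show (b - a) * x = -((a - b) * x) by ring]
  have := (rpow_pos_of_pos two_pos (a + b)).ne'
  field_simp

section ExpDivCosh

variable {a b : ℝ}

lemma integrable_exp_mul_div_two_mul_cosh_rpow (ha : 0 < a) (hb : 0 < b) :
    Integrable (fun x => exp ((a - b) * x) / (2 * cosh x) ^ (a + b)) := by
  have h := integrableOn_Ioo_zero_one_iff_integrable_sigmoid_two_mul.1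
    (integrableOn_rpow_mul_one_sub_rpow ha hb)
  simp only [jacobian_sigmoid_two_mul_mul_rpow] at h
  exact (integrable_const_mul_iff (isUnit_iff_ne_zero.2 two_ne_zero) _).1 h

lemma integral_exp_mul_div_two_mul_cosh_rpow (ha : 0 < a) (hb : 0 < b) :
    ∫ x, exp ((a - b) * x) / (2 * cosh x) ^ (a + b) = realBeta a b / 2 := by
  rw [realBeta_eq_integral ha hb, integral_Ioo_zero_one_eq_integral_sigmoid_two_mul]
  simp only [jacobian_sigmoid_two_mul_mul_rpow, integral_const_mul]
  ring

lemma integral_Ioi_cosh_mul_div_cosh_rpow (ha : 0 < a) (hb : 0 < b) :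
    ∫ x in Ioi 0, cosh ((a - b) * x) / cosh x ^ (a + b) = 2 ^ (a + b) / 4 * realBeta a b := by
  have h_even : ∫ x, cosh ((a - b) * x) / cosh x ^ (a + b)
      = 2 * ∫ x in Ioi 0, cosh ((a - b) * x) / cosh x ^ (a + b) := by
    rw [← integral_comp_abs]
    congr 1 with x
    rcases abs_choice x with h | h <;> simp only [h, mul_neg, cosh_neg]
  have h_split : ∫ x, cosh ((a - b) * x) / cosh x ^ (a + b) = 2 ^ (a + b) / 2 * realBeta a b := by
    simp only [cosh_mul_div_cosh_rpow a b, integral_const_mul]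
    rw [integral_add (integrable_exp_mul_div_two_mul_cosh_rpow ha hb)
      (integrable_exp_mul_div_two_mul_cosh_rpow hb ha),
      integral_exp_mul_div_two_mul_cosh_rpow ha hb, integral_exp_mul_div_two_mul_cosh_rpow hb ha,
      realBeta_comm b a]
    ring
  linarith

end ExpDivCosh

theorem stmt_8 (α β p : ℝ) (hp : 0 < p) (h1 : β + α / p > 0) (h2 : β - α / p > 0) :
    ∫ t in Set.Ioi (0 : ℝ), Real.cosh (2 * α * t) / (Real.cosh (p * t)) ^ (2 * β)
    = (4 : ℝ) ^ (β - 1) * p⁻¹ * realBeta (β + α / p) (β - α / p) := by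
  set a := β + α / p
  set b := β - α / p
  have h_sum : a + b = 2 * β := by ring
  have h_integrand : ∀ t, cosh (2 * α * t) / cosh (p * t) ^ (2 * β)
      = cosh ((a - b) * (p * t)) / cosh (p * t) ^ (a + b) := fun t => by
    rw [h_sum, show (a - b) * (p * t) = 2 * α * t by simp only [a, b]; field_simp; ring]
  have h_four : (4 : ℝ) ^ (β - 1) = 2 ^ (a + b) / 4 := by
    rw [rpow_sub four_pos, rpow_one, h_sum, rpow_mul zero_le_two]
    norm_num
  simp only [h_integrand]
  rw [integral_comp_mul_left_Ioi (fun x => cosh ((a - b) * x) / cosh x ^ (a + b)) 0 hp, mul_zero,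
    integral_Ioi_cosh_mul_div_cosh_rpow h1 h2, smul_eq_mul, h_four]
  ring
end

section
/- Let α and β be real numbers with α > −1 and α < β. Then ∫_0^∞ (sinh x)^α/(cosh x)^β dx = (1/2)·B((1+α)/2, (β−α)/2). -/
/-!
The substitution `t = tanh² x` maps `(0, ∞)` increasingly onto `(0, 1)`, with
`dt = 2 sinh x / cosh³ x dx` and `1 - t = 1 / cosh² x`. It turns
`t ^ ((1 + α) / 2 - 1) * (1 - t) ^ ((β - α) / 2 - 1) dt` into `2 (sinh x) ^ α / (cosh x) ^ β dx`,
so the integral is half of Euler's Beta integral.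
-/

open MeasureTheory Real Set

lemma realBeta_eq_setIntegral_Ioo {a b : ℝ} (ha : 0 < a) (hb : 0 < b) :
    realBeta a b = ∫ t in Ioo (0 : ℝ) 1, t ^ (a - 1) * (1 - t) ^ (b - 1) := by
  have hcast : Complex.betaIntegral a b =
      ((∫ t in (0 : ℝ)..1, t ^ (a - 1) * (1 - t) ^ (b - 1) : ℝ) : ℂ) := by
    rw [Complex.betaIntegral, ← intervalIntegral.integral_ofReal]
    refine intervalIntegral.integral_congr fun t ht => ?_
    rw [uIcc_of_le zero_le_one] at ht
    push_cast
    rw [Complex.ofReal_cpow ht.1, Complex.ofReal_cpow (sub_nonneg.2 ht.2)]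
    push_cast
    ring
  have hGamma := Complex.betaIntegral_eq_Gamma_mul_div a b (by simpa) (by simpa)
  rw [hcast, ← Complex.ofReal_add, Complex.Gamma_ofReal, Complex.Gamma_ofReal,
    Complex.Gamma_ofReal] at hGamma
  rw [realBeta, ← integral_Ioc_eq_integral_Ioo, ← intervalIntegral.integral_of_le zero_le_one]
  exact_mod_cast hGamma.symm

namespace Real

theorem hasDerivAt_tanh (x : ℝ) : HasDerivAt tanh (cosh x ^ 2)⁻¹ x := by
  rw [show (tanh : ℝ → ℝ) = sinh / cosh from funext tanh_eq_sinh_div_cosh]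
  refine ((hasDerivAt_sinh x).div (hasDerivAt_cosh x) (cosh_pos x).ne').congr_deriv ?_
  simp only [← sq, cosh_sq_sub_sinh_sq, one_div]

theorem one_sub_tanh_sq (x : ℝ) : 1 - tanh x ^ 2 = (cosh x ^ 2)⁻¹ := by
  rw [tanh_eq_sinh_div_cosh]
  field_simp
  linear_combination cosh_sq_sub_sinh_sq x

theorem tanh_pos {x : ℝ} (hx : 0 < x) : 0 < tanh x := by
  rw [tanh_eq_sinh_div_cosh]
  exact div_pos (sinh_pos_iff.2 hx) (cosh_pos x)

theorem image_tanh_Ioi_zero : tanh '' Ioi 0 = Ioo 0 1 := by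
  refine Subset.antisymm ?_ fun y hy =>
    ⟨artanh y, artanh_pos hy, tanh_artanh ⟨by linarith [hy.1], hy.2⟩⟩
  rintro _ ⟨x, hx, rfl⟩
  exact ⟨tanh_pos hx, tanh_lt_one x⟩

end Real

lemma image_sq_Ioo_zero_one : (fun t : ℝ => t ^ 2) '' Ioo 0 1 = Ioo 0 1 := by
  refine Subset.antisymm ?_ fun y hy =>
    ⟨√y, ⟨sqrt_pos.2 hy.1, (sqrt_lt' one_pos).2 (by simpa using hy.2)⟩, sq_sqrt hy.1.le⟩
  rintro _ ⟨t, ht, rfl⟩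
  exact ⟨pow_pos ht.1 2, pow_lt_one₀ ht.1.le ht.2 two_ne_zero⟩

lemma hasDerivAt_tanh_sq (x : ℝ) :
    HasDerivAt (fun y => tanh y ^ 2) (2 * sinh x / cosh x ^ 3) x := by
  refine ((hasDerivAt_tanh x).pow 2).congr_deriv ?_
  have := cosh_pos x
  norm_num [tanh_eq_sinh_div_cosh]
  field_simp

lemma injOn_tanh_sq : InjOn (fun x => tanh x ^ 2) (Ioi 0) := fun _ hx _ hy h =>
  tanh_injective ((pow_left_inj₀ (tanh_pos hx).le (tanh_pos hy).le two_ne_zero).1 h)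

lemma image_tanh_sq_Ioi_zero : (fun x => tanh x ^ 2) '' Ioi 0 = Ioo 0 1 := by
  rw [← image_sq_Ioo_zero_one, ← image_tanh_Ioi_zero, image_image]

lemma two_mul_sinh_rpow_div_cosh_rpow {x : ℝ} (hx : 0 < x) (α β : ℝ) :
    2 * (sinh x ^ α / cosh x ^ β) = |2 * sinh x / cosh x ^ 3| *
      ((tanh x ^ 2) ^ ((1 + α) / 2 - 1) * (1 - tanh x ^ 2) ^ ((β - α) / 2 - 1)) := by
  have hs : 0 < sinh x := sinh_pos_iff.2 hx
  have hc : 0 < cosh x := cosh_pos x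
  have htanh : (tanh x ^ 2) ^ ((1 + α) / 2 - 1)
      = sinh x ^ α / sinh x / (cosh x ^ α / cosh x) := by
    rw [tanh_eq_sinh_div_cosh, ← rpow_natCast_mul (by positivity), div_rpow hs.le hc.le]
    push_cast
    rw [show 2 * ((1 + α) / 2 - 1) = α - 1 by ring, rpow_sub_one hs.ne', rpow_sub_one hc.ne']
  have hsech : (1 - tanh x ^ 2) ^ ((β - α) / 2 - 1)
      = (cosh x ^ β / cosh x ^ α / cosh x ^ 2)⁻¹ := by
    rw [one_sub_tanh_sq, inv_rpow (by positivity), ← rpow_natCast_mul hc.le]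
    push_cast
    rw [show 2 * ((β - α) / 2 - 1) = β - α - 2 by ring, rpow_sub hc, rpow_sub hc, rpow_two]
  have := rpow_pos_of_pos hs α
  have := rpow_pos_of_pos hc α
  have := rpow_pos_of_pos hc β
  rw [abs_of_pos (by positivity), htanh, hsech]
  field_simp

theorem stmt_9 (α β : ℝ) (hα : α > -1) (hβ : α < β) :
    ∫ x in Set.Ioi (0 : ℝ), (Real.sinh x) ^ α / (Real.cosh x) ^ β
    = (1 / 2) * realBeta ((1 + α) / 2) ((β - α) / 2) := by
  have hsubst := integral_image_eq_integral_abs_deriv_smul measurableSet_Ioi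
    (fun x _ => (hasDerivAt_tanh_sq x).hasDerivWithinAt) injOn_tanh_sq
    (fun t => t ^ ((1 + α) / 2 - 1) * (1 - t) ^ ((β - α) / 2 - 1))
  rw [image_tanh_sq_Ioi_zero,
    ← realBeta_eq_setIntegral_Ioo (by linarith) (by linarith)] at hsubst
  rw [hsubst, ← integral_const_mul]
  refine setIntegral_congr_fun measurableSet_Ioi fun x hx => ?_
  rw [smul_eq_mul, ← two_mul_sinh_rpow_div_cosh_rpow hx]
  ring
end

section
/- Let n be a positive integer and let s, γ be real numbers with s > 0. Then ∫_0^∞ e^{−sx}·(sin(γx))^{2n} dx = (2n)!·γ^{2n} / ( s · ∏_{j=1}^{n} (s² + 4j²γ²) ). -/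
/-!
With `I m = ∫₀^∞ exp (-s x) sin^m (γx) dx`, integrating by parts twice (i.e. differentiating
`expSinPowPrimitive` and using `cos² = 1 - sin²`) gives the recurrence
`(s² + (m+2)² γ²) I (m+2) = (m+2)(m+1) γ² I m`. Starting from `I 0 = 1/s`, induction over the
even exponents produces the factorial and the product.
-/

open Finset MeasureTheory Set Filter Real Topology

theorem tendsto_exp_neg_mul_atTop {s : ℝ} (hs : 0 < s) :
    Tendsto (fun x : ℝ => exp (-s * x)) atTop (𝓝 0) :=
  tendsto_exp_atBot.comp (tendsto_id.const_mul_atTop_of_neg (neg_neg_iff_pos.2 hs))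

theorem integrableOn_exp_neg_mul_mul_sin_pow {s : ℝ} (hs : 0 < s) (γ : ℝ) (m : ℕ) :
    IntegrableOn (fun x : ℝ => exp (-s * x) * sin (γ * x) ^ m) (Ioi 0) := by
  refine (exp_neg_integrableOn_Ioi 0 hs).mono' (by fun_prop) (Eventually.of_forall fun x => ?_)
  rw [norm_mul, norm_of_nonneg (exp_pos _).le, norm_pow]
  exact mul_le_of_le_one_right (exp_pos _).le
    (pow_le_one₀ (norm_nonneg _) (abs_sin_le_one _))

theorem integral_Ioi_exp_neg_mul {s : ℝ} (hs : 0 < s) :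
    ∫ x in Ioi (0 : ℝ), exp (-s * x) = 1 / s := by
  rw [integral_exp_mul_Ioi (neg_neg_iff_pos.2 hs), mul_zero, exp_zero, div_neg, neg_div, neg_neg]

noncomputable def expSinPowPrimitive (s γ : ℝ) (m : ℕ) (x : ℝ) : ℝ :=
  exp (-s * x) *
    (-s * sin (γ * x) ^ (m + 2) - (m + 2) * γ * sin (γ * x) ^ (m + 1) * cos (γ * x))

theorem hasDerivAt_expSinPowPrimitive (s γ : ℝ) (m : ℕ) (x : ℝ) :
    HasDerivAt (expSinPowPrimitive s γ m)
      ((s ^ 2 + (m + 2) ^ 2 * γ ^ 2) * (exp (-s * x) * sin (γ * x) ^ (m + 2))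
        - (m + 2) * (m + 1) * γ ^ 2 * (exp (-s * x) * sin (γ * x) ^ m)) x := by
  have hlin : ∀ c : ℝ, HasDerivAt (fun x : ℝ => c * x) c x := fun c => by
    simpa using (hasDerivAt_id x).const_mul c
  have hsin := (hlin γ).sin
  refine ((hlin (-s)).exp.mul (((hsin.pow (m + 2)).const_mul (-s)).sub
    (((hsin.pow (m + 1)).const_mul ((m + 2) * γ)).mul (hlin γ).cos))).congr_deriv ?_
  simp only [Pi.sub_apply, Pi.mul_apply, Pi.pow_apply, add_tsub_cancel_right]
  push_cast
  linear_combination -((m : ℝ) + 2) * (m + 1) * γ ^ 2 * exp (-s * x) * sin (γ * x) ^ m *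
    sin_sq_add_cos_sq (γ * x)

theorem tendsto_expSinPowPrimitive_atTop {s : ℝ} (hs : 0 < s) (γ : ℝ) (m : ℕ) :
    Tendsto (expSinPowPrimitive s γ m) atTop (𝓝 0) := by
  refine (tendsto_exp_neg_mul_atTop hs).zero_mul_isBoundedUnder_le
    (isBoundedUnder_of ⟨s + (m + 2) * |γ|, fun x => ?_⟩)
  have hsin : ∀ k : ℕ, |sin (γ * x) ^ k| ≤ 1 := fun k =>
    abs_pow (sin (γ * x)) k ▸ pow_le_one₀ (abs_nonneg _) (abs_sin_le_one _)
  simp only [Function.comp_apply, Real.norm_eq_abs]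
  calc _ ≤ |-s * sin (γ * x) ^ (m + 2)|
          + |(m + 2) * γ * sin (γ * x) ^ (m + 1) * cos (γ * x)| := abs_sub _ _
    _ ≤ s * 1 + (m + 2) * |γ| * 1 * 1 := by
        have hm : (0 : ℝ) ≤ m + 2 := by positivity
        simp only [abs_mul, abs_neg, abs_of_pos hs, abs_of_nonneg hm]
        gcongr
        exacts [hsin _, hsin _, abs_cos_le_one _]
    _ = s + (m + 2) * |γ| := by ring

theorem integral_exp_neg_mul_mul_sin_pow_add_two {s : ℝ} (hs : 0 < s) (γ : ℝ) (m : ℕ) :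
    (s ^ 2 + (m + 2) ^ 2 * γ ^ 2) * ∫ x in Ioi (0 : ℝ), exp (-s * x) * sin (γ * x) ^ (m + 2)
      = (m + 2) * (m + 1) * γ ^ 2 * ∫ x in Ioi (0 : ℝ), exp (-s * x) * sin (γ * x) ^ m := by
  have hint := integrableOn_exp_neg_mul_mul_sin_pow hs γ
  have hFTC := integral_Ioi_of_hasDerivAt_of_tendsto'
    (fun x _ => hasDerivAt_expSinPowPrimitive s γ m x)
    (((hint _).const_mul _).sub ((hint _).const_mul _))
    (tendsto_expSinPowPrimitive_atTop hs γ m)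
  rw [integral_sub ((hint _).const_mul _) ((hint _).const_mul _), integral_const_mul,
    integral_const_mul] at hFTC
  simpa [expSinPowPrimitive, sub_eq_zero] using hFTC

theorem stmt_12_general (n : ℕ) (s γ : ℝ) (hs : 0 < s) :
    ∫ x in Set.Ioi (0 : ℝ), Real.exp (-s * x) * (Real.sin (γ * x)) ^ (2 * n)
    = (Nat.factorial (2 * n) : ℝ) * γ ^ (2 * n) /
        (s * ∏ j ∈ Finset.range n, (s ^ 2 + 4 * ((j : ℝ) + 1) ^ 2 * γ ^ 2)) := by
  induction n with
  | zero => simpa using integral_Ioi_exp_neg_mul hs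
  | succ n ih =>
    have hrec := integral_exp_neg_mul_mul_sin_pow_add_two hs γ (2 * n)
    have hD : 0 < s ^ 2 + 4 * ((n : ℝ) + 1) ^ 2 * γ ^ 2 := by positivity
    rw [ih] at hrec
    rw [mul_add_one, prod_range_succ, Nat.factorial_succ, Nat.factorial_succ,
      eq_div_iff (by positivity), ← mul_right_inj' hD.ne']
    push_cast at hrec ⊢
    field_simp at hrec ⊢
    linear_combination hrec

theorem stmt_12 (n : ℕ) (hn : 0 < n) (s γ : ℝ) (hs : 0 < s) :
    ∫ x in Set.Ioi (0 : ℝ), Real.exp (-s * x) * (Real.sin (γ * x)) ^ (2 * n)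
    = (Nat.factorial (2 * n) : ℝ) * γ ^ (2 * n) /
        (s * ∏ j ∈ Finset.range n, (s ^ 2 + 4 * ((j : ℝ) + 1) ^ 2 * γ ^ 2)) :=
  stmt_12_general n s γ hs
end

section
/- Let p be a nonnegative integer and let s, λ be real numbers with s > 0. Then ∫_0^∞ e^{−sx}·(sin(λx))^{2p+1} dx = (−1)^p·2^{−2p} · ∑_{k=0}^{p} (−1)^k·C(2p+1, k) · ((2p+1 − 2k)λ)/(((2p+1 − 2k)λ)² + s²). -/
/-!
Expanding `(2 I sin x) ^ (2p+1) = (e^{ix} - e^{-ix}) ^ (2p+1)` binomially and pairing the terms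
`k` and `2p+1-k` (which differ by the sign `(-1)^(2p+1) = -1`) linearizes `sin^(2p+1) x` into a
combination of `sin ((2p+1-2k) x)`. Each of these has Laplace transform
`b / (b^2 + s^2) = Im ∫₀^∞ e^{(-s + i b) x} dx`.
-/

open Finset MeasureTheory

theorem Finset.sum_range_two_mul_eq_sum_add_reflect {M : Type*} [AddCommMonoid M]
    (f : ℕ → M) (m : ℕ) :
    ∑ j ∈ range (2 * m), f j = ∑ k ∈ range m, (f k + f (2 * m - 1 - k)) := by
  rw [two_mul, sum_range_add, sum_add_distrib, ← sum_range_reflect (fun j => f (m + j))]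
  refine congrArg _ (sum_congr rfl fun k hk => ?_)
  have := mem_range.mp hk
  congr 1
  omega

theorem sub_pow_two_mul_add_one {R : Type*} [CommRing R] (z w : R) (p : ℕ) :
    (z - w) ^ (2 * p + 1) = ∑ k ∈ range (p + 1), (-1) ^ k * ((2 * p + 1).choose k : R) *
      (z ^ (2 * p + 1 - k) * w ^ k - z ^ k * w ^ (2 * p + 1 - k)) := by
  rw [sub_eq_neg_add, add_pow, show 2 * p + 1 + 1 = 2 * (p + 1) by ring,
    sum_range_two_mul_eq_sum_add_reflect]
  refine sum_congr rfl fun k hk => ?_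
  have hk : k ≤ p := Nat.lt_succ_iff.mp (mem_range.mp hk)
  have hsign : (-1 : R) ^ (2 * p + 1 - k) = -(-1) ^ k := by
    rw [show 2 * p + 1 - k = 2 * (p - k) + 1 + k by omega, pow_add, pow_succ, pow_mul, neg_one_sq,
      one_pow]
    ring
  rw [show 2 * (p + 1) - 1 - k = 2 * p + 1 - k by omega,
    show 2 * p + 1 - (2 * p + 1 - k) = k by omega, Nat.choose_symm (by omega), neg_pow, neg_pow w,
    hsign]
  ring

namespace Complex

theorem two_I_mul_sin (x : ℂ) : 2 * I * sin x = exp (x * I) - exp (-x * I) := by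
  rw [mul_right_comm, two_sin]
  linear_combination (exp (-x * I) - exp (x * I)) * I_sq

theorem sin_pow_two_mul_add_one (p : ℕ) (x : ℂ) :
    sin x ^ (2 * p + 1) = (-1) ^ p * 2 ^ (-(2 * (p : ℤ))) *
      ∑ k ∈ range (p + 1), (-1) ^ k * ((2 * p + 1).choose k : ℂ) *
        sin ((2 * p + 1 - 2 * k) * x) := by
  have hpair : ∀ k ∈ range (p + 1),
      exp (x * I) ^ (2 * p + 1 - k) * exp (-x * I) ^ k -
          exp (x * I) ^ k * exp (-x * I) ^ (2 * p + 1 - k)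
        = 2 * I * sin ((2 * p + 1 - 2 * k) * x) := fun k hk => by
    have hk : k ≤ 2 * p + 1 := by have := mem_range.mp hk; omega
    simp only [two_I_mul_sin, ← exp_nat_mul, ← exp_add]
    congr 2 <;> push_cast [Nat.cast_sub hk] <;> ring
  have hcoeff : (2 * I) ^ (2 * p + 1) * ((-1) ^ p * 2 ^ (-(2 * (p : ℤ)))) = 2 * I := by
    have h4p : (2 ^ 2 : ℂ) ^ p ≠ 0 := pow_ne_zero _ (by norm_num)
    rw [pow_succ, pow_mul, mul_pow, I_sq, zpow_neg, zpow_mul, zpow_natCast, mul_pow]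
    field_simp
    rw [← pow_mul, mul_comm, pow_mul, neg_one_sq, one_pow]
  apply mul_left_cancel₀ (pow_ne_zero (2 * p + 1) (mul_ne_zero two_ne_zero I_ne_zero))
  rw [← mul_pow, two_I_mul_sin, sub_pow_two_mul_add_one,
    sum_congr rfl fun k hk => by rw [hpair k hk], ← mul_assoc, hcoeff, mul_sum]
  exact sum_congr rfl fun k _ => by ring

end Complex

theorem Real.sin_pow_two_mul_add_one (p : ℕ) (x : ℝ) :
    sin x ^ (2 * p + 1) = (-1) ^ p * 2 ^ (-(2 * (p : ℤ))) *
      ∑ k ∈ range (p + 1), (-1) ^ k * ((2 * p + 1).choose k : ℝ) *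
        sin ((2 * p + 1 - 2 * k) * x) := by
  apply Complex.ofReal_injective
  push_cast
  exact Complex.sin_pow_two_mul_add_one p x

theorem Real.exp_neg_mul_mul_sin_eq_im (s b x : ℝ) :
    Real.exp (-s * x) * Real.sin (b * x) = RCLike.im (Complex.exp ((-s + b * Complex.I) * x)) := by
  simp [Complex.exp_im]

theorem integrableOn_exp_neg_mul_mul_sin {s : ℝ} (hs : 0 < s) (b : ℝ) :
    IntegrableOn (fun x => Real.exp (-s * x) * Real.sin (b * x)) (Set.Ioi 0) := by
  simp_rw [Real.exp_neg_mul_mul_sin_eq_im]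
  exact (integrableOn_exp_mul_complex_Ioi (by simpa using hs) 0).im

theorem integral_exp_neg_mul_mul_sin {s : ℝ} (hs : 0 < s) (b : ℝ) :
    ∫ x in Set.Ioi (0 : ℝ), Real.exp (-s * x) * Real.sin (b * x) = b / (b ^ 2 + s ^ 2) := by
  have ha : (-s + b * Complex.I).re < 0 := by simpa using hs
  simp_rw [Real.exp_neg_mul_mul_sin_eq_im]
  rw [integral_im (integrableOn_exp_mul_complex_Ioi ha 0), integral_exp_mul_complex_Ioi ha 0]
  have hden : b ^ 2 + s ^ 2 ≠ 0 := by positivity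
  simp [Complex.div_im, Complex.normSq_apply, field, add_comm]

theorem stmt_13 (p : ℕ) (s lam : ℝ) (hs : 0 < s) :
    ∫ x in Set.Ioi (0 : ℝ), Real.exp (-s * x) * (Real.sin (lam * x)) ^ (2 * p + 1)
    = (-1 : ℝ) ^ p * 2 ^ (-(2 * (p : ℤ))) *
        ∑ k ∈ Finset.range (p + 1),
          (-1 : ℝ) ^ k * (Nat.choose (2 * p + 1) k : ℝ) *
            (((2 * (p : ℝ) + 1 - 2 * (k : ℝ)) * lam) /
              (((2 * (p : ℝ) + 1 - 2 * (k : ℝ)) * lam) ^ 2 + s ^ 2)) := by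
  set c : ℕ → ℝ := fun k => (-1 : ℝ) ^ p * 2 ^ (-(2 * (p : ℤ))) *
    ((-1 : ℝ) ^ k * (Nat.choose (2 * p + 1) k : ℝ))
  set b : ℕ → ℝ := fun k => (2 * (p : ℝ) + 1 - 2 * (k : ℝ)) * lam
  calc ∫ x in Set.Ioi (0 : ℝ), Real.exp (-s * x) * (Real.sin (lam * x)) ^ (2 * p + 1)
      = ∫ x in Set.Ioi (0 : ℝ), ∑ k ∈ range (p + 1),
          c k * (Real.exp (-s * x) * Real.sin (b k * x)) := by
        refine integral_congr_ae (Filter.Eventually.of_forall fun x => ?_)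
        simp only [Real.sin_pow_two_mul_add_one, mul_sum, b, c]
        exact sum_congr rfl fun k _ => by ring_nf
    _ = ∑ k ∈ range (p + 1), c k * (b k / (b k ^ 2 + s ^ 2)) := by
        rw [integral_finsetSum _ fun k _ => (integrableOn_exp_neg_mul_mul_sin hs (b k)).const_mul _]
        simp only [integral_const_mul, integral_exp_neg_mul_mul_sin hs]
    _ = _ := by
        rw [mul_sum]
        exact sum_congr rfl fun k _ => mul_assoc _ _ _
end
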